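/- If A(t) is a formal power series with A(0) ≠ 0 and with logarithmic derivative A'(t)/A(t) = ∑_{k≥0} β_k t^k/k!, then the Gauss-Appell polynomials satisfy the pure recursion {}_{2F_1}A_{n+1}(a,b;c;x) = (abx/c) · {}_{2F_1}A_n(a+1,b+1;c+1;x) + ∑_{k=0}^{n} C(n,k) β_k · {}_{2F_1}A_{n-k}(a,b;c;x). -/

import Mathlib

noncomputable section

/-- Pochhammer symbol (rising factorial). -/
def poch (r : ℂ) : ℕ → ℂ
  | 0 => 1
  | k + 1 => poch r k * (r + k)

/-- Gauss-Appell polynomials. -/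
def GA (A : ℕ → ℂ) (a b c x : ℂ) (n : ℕ) : ℂ :=
  ∑ k ∈ Finset.range (n + 1),
    (n.choose k : ℂ) * x ^ k * poch a k * poch b k / poch c k * A (n - k)

lemma poch_succ' (r : ℂ) (k : ℕ) : poch r (k + 1) = r * poch (r + 1) k := by
  induction k with
  | zero => simp [poch]
  | succ k ih =>
      have h1 : poch r (k + 1 + 1) = poch r (k + 1) * (r + (k + 1 : ℕ)) := rfl
      have h2 : poch (r + 1) (k + 1) = poch (r + 1) k * (r + 1 + (k : ℕ)) := rfl
      rw [h1, ih, h2]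
      push_cast
      ring

lemma choose_trinom {n k j : ℕ} (h : k + j ≤ n) :
    n.choose k * (n - k).choose j = n.choose j * (n - j).choose k := by
  have h1 := Nat.choose_mul (n := n) (Nat.le_add_right k j)
  have h2 := Nat.choose_mul (n := n) (Nat.le_add_left j k)
  simp only [Nat.add_sub_cancel_left, Nat.add_sub_cancel] at h1 h2
  have h3 : (k + j).choose k = (k + j).choose j := by
    rw [← Nat.choose_symm (Nat.le_add_left j k), Nat.add_sub_cancel]
  rw [h3] at h1
  rw [← h1, ← h2]

open PowerSeries in
theorem stmt4 (A : ℕ → ℂ) (β : ℕ → ℂ) (a b c x : ℂ) (n : ℕ)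
    (hA0 : A 0 ≠ 0) (hcne : c ≠ 0)
    (hc : ∀ k, poch c k ≠ 0) (hc1 : ∀ k, poch (c + 1) k ≠ 0)
    (hβ : PowerSeries.derivativeFun (PowerSeries.mk fun m => A m / (m.factorial : ℂ)) =
      (PowerSeries.mk fun m => A m / (m.factorial : ℂ)) *
        PowerSeries.mk (fun k => β k / (k.factorial : ℂ))) :
    GA A a b c x (n + 1) =
      a * b * x / c * GA A (a + 1) (b + 1) (c + 1) x n +
        ∑ k ∈ Finset.range (n + 1), (n.choose k : ℂ) * β k * GA A a b c x (n - k) := by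
  have hfac : ∀ r : ℕ, ((r.factorial : ℂ)) ≠ 0 := fun r => by
    exact_mod_cast Nat.cast_ne_zero.mpr (Nat.factorial_pos r).ne'
  -- Step 1: recurrence for A from hβ
  have hArec : ∀ m : ℕ, A (m + 1) =
      ∑ j ∈ Finset.range (m + 1), (m.choose j : ℂ) * β j * A (m - j) := by
    intro m
    have h := congrArg (PowerSeries.coeff (R := ℂ) m) hβ
    change PowerSeries.coeff m (PowerSeries.derivative ℂ _) = _ at h
    rw [PowerSeries.coeff_derivativeFun, PowerSeries.coeff_mk, PowerSeries.coeff_mul] at h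
    rw [Finset.Nat.sum_antidiagonal_eq_sum_range_succ_mk] at h
    simp only [PowerSeries.coeff_mk] at h
    have hm1 : ((m : ℂ) + 1) ≠ 0 := Nat.cast_add_one_ne_zero m
    have hlhs : A (m + 1) / ((m + 1).factorial : ℂ) * ((m : ℂ) + 1) =
        A (m + 1) / (m.factorial : ℂ) := by
      have hf : (((m + 1).factorial : ℂ)) = ((m : ℂ) + 1) * (m.factorial : ℂ) := by
        rw [Nat.factorial_succ]; push_cast; ring
      rw [hf, div_mul_eq_mul_div, mul_comm (A (m + 1)), mul_div_mul_left _ _ hm1]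
    rw [hlhs] at h
    have h' := congrArg (fun z => z * (m.factorial : ℂ)) h
    simp only [div_mul_cancel₀ _ (hfac m), Finset.sum_mul] at h'
    rw [h']
    rw [← Finset.sum_range_reflect]
    apply Finset.sum_congr rfl
    intro j hj
    rw [Finset.mem_range] at hj
    have hjm : j ≤ m := Nat.lt_succ_iff.mp hj
    have hrefl : m + 1 - 1 - j = m - j := by omega
    rw [hrefl]
    have hsub : m - (m - j) = j := by omega
    rw [hsub]
    have hchoose : (m.choose j : ℂ) * (j.factorial : ℂ) * ((m - j).factorial : ℂ)
        = (m.factorial : ℂ) := by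
      exact_mod_cast congrArg (Nat.cast : ℕ → ℂ)
        (Nat.choose_mul_factorial_mul_factorial hjm)
    rw [div_mul_div_comm, div_mul_eq_mul_div,
      div_eq_iff (mul_ne_zero (hfac (m - j)) (hfac j)), ← hchoose]
    ring
  -- Step 2: split GA at n+1 via Pascal
  have hsplit : GA A a b c x (n + 1) =
      (∑ k ∈ Finset.range (n + 1),
        (n.choose k : ℂ) * x ^ (k + 1) * poch a (k + 1) * poch b (k + 1)
          / poch c (k + 1) * A (n - k)) +
      (∑ k ∈ Finset.range (n + 1),
        (n.choose k : ℂ) * x ^ k * poch a k * poch b k / poch c k * A (n + 1 - k)) := by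
    rw [GA]
    rw [Finset.sum_range_succ' (fun k =>
      ((n + 1).choose k : ℂ) * x ^ k * poch a k * poch b k / poch c k * A (n + 1 - k))]
    have hpascal : ∀ k : ℕ,
        ((n + 1).choose (k + 1) : ℂ) = (n.choose k : ℂ) + (n.choose (k + 1) : ℂ) := by
      intro k; rw [Nat.choose_succ_succ]; push_cast; ring
    have hstep : ∀ k ∈ Finset.range (n + 1),
        ((n + 1).choose (k + 1) : ℂ) * x ^ (k + 1) * poch a (k + 1) * poch b (k + 1)
            / poch c (k + 1) * A (n + 1 - (k + 1)) =
        (n.choose k : ℂ) * x ^ (k + 1) * poch a (k + 1) * poch b (k + 1)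
            / poch c (k + 1) * A (n - k) +
        (n.choose (k + 1) : ℂ) * x ^ (k + 1) * poch a (k + 1) * poch b (k + 1)
            / poch c (k + 1) * A (n + 1 - (k + 1)) := by
      intro k hk
      rw [Finset.mem_range] at hk
      have : n + 1 - (k + 1) = n - k := by omega
      rw [this, hpascal k]
      ring
    rw [Finset.sum_congr rfl hstep, Finset.sum_add_distrib]
    have h1 : (∑ k ∈ Finset.range (n + 1),
        (n.choose (k + 1) : ℂ) * x ^ (k + 1) * poch a (k + 1) * poch b (k + 1)
          / poch c (k + 1) * A (n + 1 - (k + 1))) +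
        ((n + 1).choose 0 : ℂ) * x ^ 0 * poch a 0 * poch b 0 / poch c 0 * A (n + 1 - 0) =
        ∑ k ∈ Finset.range (n + 2),
          (n.choose k : ℂ) * x ^ k * poch a k * poch b k / poch c k * A (n + 1 - k) := by
      rw [Finset.sum_range_succ' (fun k =>
        (n.choose k : ℂ) * x ^ k * poch a k * poch b k / poch c k * A (n + 1 - k))]
      simp [poch]
    have h2 : ∑ k ∈ Finset.range (n + 2),
          (n.choose k : ℂ) * x ^ k * poch a k * poch b k / poch c k * A (n + 1 - k) =
        ∑ k ∈ Finset.range (n + 1),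
          (n.choose k : ℂ) * x ^ k * poch a k * poch b k / poch c k * A (n + 1 - k) := by
      rw [Finset.sum_range_succ, Nat.choose_succ_self]
      simp
    calc _ = ((∑ k ∈ Finset.range (n + 1),
          (n.choose (k + 1) : ℂ) * x ^ (k + 1) * poch a (k + 1) * poch b (k + 1)
            / poch c (k + 1) * A (n + 1 - (k + 1))) +
          ((n + 1).choose 0 : ℂ) * x ^ 0 * poch a 0 * poch b 0 / poch c 0 * A (n + 1 - 0)) +
          (∑ k ∈ Finset.range (n + 1),
            (n.choose k : ℂ) * x ^ (k + 1) * poch a (k + 1) * poch b (k + 1)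
              / poch c (k + 1) * A (n - k)) := by ring
      _ = _ := by rw [h1, h2, add_comm]
  rw [hsplit]
  congr 1
  -- Step 3: first sum equals a*b*x/c * GA shifted
  · rw [GA, Finset.mul_sum]
    apply Finset.sum_congr rfl
    intro k _
    rw [poch_succ' a, poch_succ' b, poch_succ' c]
    field_simp
    ring
  -- Step 4: second sum equals the β convolution
  · have hT1 : ∑ k ∈ Finset.range (n + 1),
        (n.choose k : ℂ) * x ^ k * poch a k * poch b k / poch c k * A (n + 1 - k) =
        ∑ k ∈ Finset.range (n + 1), ∑ j ∈ Finset.range (n - k + 1),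
          (n.choose k : ℂ) * x ^ k * poch a k * poch b k / poch c k *
            (((n - k).choose j : ℂ) * β j * A (n - k - j)) := by
      apply Finset.sum_congr rfl
      intro k hk
      rw [Finset.mem_range] at hk
      have : n + 1 - k = (n - k) + 1 := by omega
      rw [this, hArec (n - k), Finset.mul_sum]
    rw [hT1]
    rw [Finset.sum_comm' (t' := Finset.range (n + 1))
      (s' := fun j => Finset.range (n - j + 1)) (by
        intro k j
        simp only [Finset.mem_range]
        omega)]
    apply Finset.sum_congr rfl
    intro j hj
    rw [Finset.mem_range] at hj
    rw [GA, Finset.mul_sum]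
    apply Finset.sum_congr rfl
    intro k hk
    rw [Finset.mem_range] at hk
    have hkj : k + j ≤ n := by omega
    have hcho : (n.choose k : ℂ) * ((n - k).choose j : ℂ)
        = (n.choose j : ℂ) * ((n - j).choose k : ℂ) := by
      exact_mod_cast congrArg (Nat.cast : ℕ → ℂ) (choose_trinom hkj)
    have hsub : n - k - j = n - j - k := by omega
    rw [hsub]
    have hpc := hc k
    field_simp
    linear_combination (x ^ k * poch a k * poch b k * β j * A (n - j - k)) * hcho
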